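/- arXiv:2211.07154 — 2 statements merged into one kernel-verified Lean document; each statement's English description precedes it below -/
import Mathlib

section
/- Let G be a finite graph and A, B ⊆ V(G). If S is a minimal (A,B)-separator and S' is an important (A,B)-separator that dominates S, then S' is an (S,B)-separator. -/
open SimpleGraph

variable {V ι : Type*}

/-- The torso of `G` on a vertex set `X`: vertices `u ≠ v` of `X` are adjacent iff there is a
`u`–`v` walk in `G` all of whose internal vertices lie outside `X`. -/
def torsoGraph (G : SimpleGraph V) (X : Set V) : SimpleGraph V where
  Adj u v := u ≠ v ∧ u ∈ X ∧ v ∈ X ∧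
    ∃ p : G.Walk u v, ∀ w ∈ p.support, w = u ∨ w = v ∨ w ∉ X
  symm := ⟨by
    rintro u v ⟨hne, hu, hv, p, hp⟩
    refine ⟨hne.symm, hv, hu, p.reverse, ?_⟩
    intro w hw
    rw [SimpleGraph.Walk.support_reverse, List.mem_reverse] at hw
    rcases hp w hw with h | h | h
    · exact Or.inr (Or.inl h)
    · exact Or.inl h
    · exact Or.inr (Or.inr h)⟩
  loopless := ⟨fun _ h => h.1 rfl⟩

/-- `(T, bag)` is a tree decomposition of `G`. -/
structure IsTreeDecomp (G : SimpleGraph V) (T : SimpleGraph ι) (bag : ι → Set V) : Prop where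
  tree : T.IsTree
  mem_bag : ∀ v : V, ∃ t, v ∈ bag t
  edge_bag : ∀ ⦃u v : V⦄, G.Adj u v → ∃ t, u ∈ bag t ∧ v ∈ bag t
  conn : ∀ v : V, (T.induce {t | v ∈ bag t}).Connected

/-- `(X, (T, bag))` is a torso tree decomposition in `G`, i.e. `(T, bag)` is a tree
decomposition of `torsoGraph G X`. -/
structure IsTorsoTreeDecomp (G : SimpleGraph V) (X : Set V)
    (T : SimpleGraph ι) (bag : ι → Set V) : Prop where
  tree : T.IsTree
  bag_subset : ∀ t, bag t ⊆ X
  mem_bag : ∀ v ∈ X, ∃ t, v ∈ bag t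
  edge_bag : ∀ ⦃u v : V⦄, (torsoGraph G X).Adj u v → ∃ t, u ∈ bag t ∧ v ∈ bag t
  conn : ∀ v ∈ X, (T.induce {t | v ∈ bag t}).Connected

/-- `G` has treewidth at most `k`. -/
def HasTreewidthAtMost (G : SimpleGraph V) (k : ℕ) : Prop :=
  ∃ (n : ℕ) (T : SimpleGraph (Fin n)) (bag : Fin n → Set V),
    IsTreeDecomp G T bag ∧ ∀ t, (bag t).ncard ≤ k + 1

/-- `S` is an `(X, Y)`-separator in `G`: every walk from `X` to `Y` meets `S`. -/
def IsSep (G : SimpleGraph V) (X Y S : Set V) : Prop :=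
  ∀ ⦃x y : V⦄, x ∈ X → y ∈ Y → ∀ p : G.Walk x y, ∃ s ∈ S, s ∈ p.support

/-- The maximum number of vertex-disjoint `X`–`Y` paths; by Menger's theorem this equals the
minimum size of an `(X, Y)`-separator, which is how we define it. -/
noncomputable def flowG (G : SimpleGraph V) (X Y : Set V) : ℕ :=
  sInf (Set.ncard '' {S : Set V | IsSep G X Y S})

/-- `X` is linked into `Y`. -/
def LinkedInto (G : SimpleGraph V) (X Y : Set V) : Prop :=
  flowG G X Y = X.ncard

/-- `X` is strictly linked into `Y`. -/
def StrictlyLinkedInto (G : SimpleGraph V) (X Y : Set V) : Prop :=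
  LinkedInto G X Y ∧
    ∀ S : Set V, IsSep G X Y S → S.ncard = X.ncard → S = X ∨ S = Y

/-- `R_G(X, S)`: the set of vertices of `G \ S` reachable from `X \ S`. -/
def reachG (G : SimpleGraph V) (X S : Set V) : Set V :=
  {v | ∃ x ∈ X, x ∉ S ∧ ∃ p : G.Walk x v, ∀ w ∈ p.support, w ∉ S}

/-- `S` is a minimal `(X, Y)`-separator. -/
def IsMinimalSep (G : SimpleGraph V) (X Y S : Set V) : Prop :=
  IsSep G X Y S ∧ ∀ S' : Set V, S' ⊂ S → ¬ IsSep G X Y S'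

/-- `S` is an important `(A, B)`-separator. -/
def IsImportantSep (G : SimpleGraph V) (A B S : Set V) : Prop :=
  IsMinimalSep G A B S ∧
    ¬ ∃ S' : Set V, IsSep G A B S' ∧ S'.ncard ≤ S.ncard ∧ reachG G A S ⊂ reachG G A S'

/-- The important `(A, B)`-separator `S'` dominates the `(A, B)`-separator `S`. -/
def DominatesSep (G : SimpleGraph V) (A B S S' : Set V) : Prop :=
  IsImportantSep G A B S' ∧ S'.ncard ≤ S.ncard ∧ reachG G A S ⊆ reachG G A S'

/-- `(A, S, B)` is a separation of `G`. -/
structure IsSeparation (G : SimpleGraph V) (A S B : Set V) : Prop where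
  disjoint_AS : Disjoint A S
  disjoint_AB : Disjoint A B
  disjoint_SB : Disjoint S B
  union_eq : A ∪ S ∪ B = Set.univ
  no_adj : ∀ ⦃a b : V⦄, a ∈ A → b ∈ B → ¬ G.Adj a b

open Classical in
/-- The flow potential `flp_G(X, Y)`. -/
noncomputable def flpG (G : SimpleGraph V) (X Y : Set V) : ℕ :=
  if X = Set.univ then X.ncard
  else sInf {n : ℕ | ∃ A S B : Set V, IsSeparation G A S B ∧
    X ⊆ A ∪ S ∧ Y ⊆ B ∪ S ∧ B.Nonempty ∧ S.ncard = n}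

/-- The graph consisting of a clique on `S` (and no other edges). -/
def cliqueOn (S : Set V) : SimpleGraph V where
  Adj u v := u ≠ v ∧ u ∈ S ∧ v ∈ S
  symm := ⟨fun _ _ ⟨h, hu, hv⟩ => ⟨h.symm, hv, hu⟩⟩
  loopless := ⟨fun _ h => h.1 rfl⟩

/-- `G ⊗ S`: the graph obtained from `G` by making `S` a clique. -/
def addCliqueG (G : SimpleGraph V) (S : Set V) : SimpleGraph V := G ⊔ cliqueOn S

/-- `(G, Ws, k)` is an instance of Partitioned Subset Treewidth: `Ws` is a finite nonempty
family of terminal cliques, `k ≥ 1`, each terminal clique being a clique of `G` of size at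
most `k + 1`. -/
def IsPSTWInstance (G : SimpleGraph V) (Ws : Set (Set V)) (k : ℕ) : Prop :=
  Ws.Finite ∧ Ws.Nonempty ∧ 1 ≤ k ∧ ∀ W ∈ Ws, G.IsClique W ∧ W.ncard ≤ k + 1

/-- `(X, (T, bag))` is a solution of the instance `(G, Ws, k)`. -/
def IsSolutionTD (G : SimpleGraph V) (Ws : Set (Set V)) (k : ℕ)
    (X : Set V) (T : SimpleGraph ι) (bag : ι → Set V) : Prop :=
  IsTorsoTreeDecomp G X T bag ∧ ⋃₀ Ws ⊆ X ∧ ∀ t, (bag t).ncard ≤ k + 1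

/-- The instance `(G, Ws, k)` is a yes-instance. -/
def IsYesInstance (G : SimpleGraph V) (Ws : Set (Set V)) (k : ℕ) : Prop :=
  ∃ (κ : Type) (T : SimpleGraph κ) (bag : κ → Set V) (X : Set V),
    IsSolutionTD G Ws k X T bag

/-- `W̄_I(W)`: the union of the terminal cliques other than `W`. -/
def otherUnion (Ws : Set (Set V)) (W : Set V) : Set V := ⋃₀ (Ws \ {W})

/-- `flp_I(W) = flp_G(W, W̄_I(W))`. -/
noncomputable def flpInst (G : SimpleGraph V) (Ws : Set (Set V)) (W : Set V) : ℕ :=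
  flpG G W (otherUnion Ws W)

/-- `(A, S, B)` is a safe separation of the instance `(G, Ws, k)`. -/
def IsSafeSeparation (G : SimpleGraph V) (Ws : Set (Set V)) (A S B : Set V) : Prop :=
  IsSeparation G A S B ∧ A.Nonempty ∧ B.Nonempty ∧
    ∃ Wa ∈ Ws, ∃ Wb ∈ Ws,
      LinkedInto G S ((A ∪ S) ∩ Wa) ∧ LinkedInto G S ((B ∪ S) ∩ Wb)

/-- `Ws ◁ (A, S)`: remove the terminal cliques not meeting `A`, then insert `S` if no superset
of `S` is present. -/
def restrictCliques (Ws : Set (Set V)) (A S : Set V) : Set (Set V) :=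
  {W ∈ Ws | (W ∩ A).Nonempty} ∪
    {W | W = S ∧ ¬ ∃ W' ∈ Ws, (W' ∩ A).Nonempty ∧ S ⊆ W'}

/-- `G ◁ (A, S) = G[A ∪ S] ⊗ S`, as a graph on the vertex set `A ∪ S`. -/
def restrictGraph (G : SimpleGraph V) (A S : Set V) : SimpleGraph ↥(A ∪ S) :=
  addCliqueG (G.induce (A ∪ S)) (Subtype.val ⁻¹' S)

/-- The terminal cliques of `I ◁ (A, S)`, viewed as subsets of the vertex set `A ∪ S`. -/
def restrictSets (Ws : Set (Set V)) (A S : Set V) : Set (Set ↥(A ∪ S)) :=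
  (fun W => Subtype.val ⁻¹' W) '' restrictCliques Ws A S

/-- The terminal cliques of `I × (Wi, Wj)`. -/
def mergeCliques (Ws : Set (Set V)) (Wi Wj : Set V) : Set (Set V) :=
  insert (Wi ∪ Wj) (Ws \ {Wi, Wj})

/-- The terminal cliques of `I + (W, ·)`, replacing `W` by `W'`. -/
def replaceClique (Ws : Set (Set V)) (W W' : Set V) : Set (Set V) :=
  insert W' (Ws \ {W})

/-- The instance `(G, Ws, k)` is maximally merged. -/
def MaximallyMerged (G : SimpleGraph V) (Ws : Set (Set V)) (k : ℕ) : Prop :=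
  ∀ Wi ∈ Ws, ∀ Wj ∈ Ws, Wi ≠ Wj → (Wi ∪ Wj).ncard ≤ k + 1 →
    ¬ IsYesInstance (addCliqueG G (Wi ∪ Wj)) (mergeCliques Ws Wi Wj) k

/-- `Wi` is a potential forget-clique of the instance `(G, Ws, k)`. -/
def IsPotentialForgetClique (G : SimpleGraph V) (Ws : Set (Set V)) (k : ℕ)
    (Wi : Set V) : Prop :=
  ∃ (κ : Type) (T : SimpleGraph κ) (bag : κ → Set V) (X : Set V),
    IsSolutionTD G Ws k X T bag ∧
    ∃ l p : κ, T.Adj l p ∧ (∀ q, T.Adj l q → q = p) ∧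
      Wi ⊆ bag l ∧ ∃ w ∈ Wi \ otherUnion Ws Wi, bag p = bag l \ {w}

/-- The disjoint union of two trees together with one extra edge between `a` and `b`. -/
def glueTrees {ι₁ ι₂ : Type*} (T₁ : SimpleGraph ι₁) (T₂ : SimpleGraph ι₂)
    (a : ι₁) (b : ι₂) : SimpleGraph (ι₁ ⊕ ι₂) where
  Adj x y :=
    (∃ u v, T₁.Adj u v ∧ x = Sum.inl u ∧ y = Sum.inl v) ∨
    (∃ u v, T₂.Adj u v ∧ x = Sum.inr u ∧ y = Sum.inr v) ∨
    (x = Sum.inl a ∧ y = Sum.inr b) ∨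
    (x = Sum.inr b ∧ y = Sum.inl a)
  symm := ⟨by
    rintro x y (⟨u, v, h, rfl, rfl⟩ | ⟨u, v, h, rfl, rfl⟩ | ⟨rfl, rfl⟩ | ⟨rfl, rfl⟩)
    · exact Or.inl ⟨v, u, h.symm, rfl, rfl⟩
    · exact Or.inr (Or.inl ⟨v, u, h.symm, rfl, rfl⟩)
    · exact Or.inr (Or.inr (Or.inr ⟨rfl, rfl⟩))
    · exact Or.inr (Or.inr (Or.inl ⟨rfl, rfl⟩))⟩
  loopless := ⟨by
    rintro x (⟨u, v, h, rfl, he⟩ | ⟨u, v, h, rfl, he⟩ | ⟨rfl, he⟩ | ⟨rfl, he⟩)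
    · exact h.ne (Sum.inl.inj he)
    · exact h.ne (Sum.inr.inj he)
    · exact Sum.inl_ne_inr he
    · exact Sum.inr_ne_inl he⟩

/-- The sum of the weights `d` over the set `S`. -/
noncomputable def setSum [Finite V] (d : V → ℕ) (S : Set V) : ℕ :=
  ∑ v ∈ S.toFinite.toFinset, d v

/-! Every vertex `s` of a minimal `(A, B)`-separator `S` either lies in `A` or has a neighbour in
`R(A, S)`: otherwise `S \ {s}` would still separate `A` from `B`. Since `R(A, S) ⊆ R(A, S')`, a
walk from `s` to `B` avoiding `S'` would extend to a walk from `A \ S'` to `B` avoiding `S'`. -/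

section reachG

variable {G : SimpleGraph V} {X Y S : Set V} {v w : V}

theorem notMem_of_mem_reachG (hv : v ∈ reachG G X S) : v ∉ S := by
  obtain ⟨_, _, _, p, hp⟩ := hv
  exact hp v p.end_mem_support

theorem mem_reachG_of_walk (hv : v ∈ reachG G X S) (p : G.Walk v w)
    (hp : ∀ u ∈ p.support, u ∉ S) : w ∈ reachG G X S := by
  obtain ⟨x, hx, hxS, q, hq⟩ := hv
  refine ⟨x, hx, hxS, q.append p, fun u hu => ?_⟩
  rcases (q.mem_support_append_iff p).mp hu with hu | hu
  exacts [hq u hu, hp u hu]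

theorem IsSep.disjoint_reachG (h : IsSep G X Y S) : Disjoint (reachG G X S) Y := by
  refine Set.disjoint_left.mpr fun y ⟨x, hx, _, q, hq⟩ hy => ?_
  obtain ⟨s, hs, hsq⟩ := h hx hy q
  exact hq s hsq hs

theorem IsMinimalSep.mem_or_exists_adj_reachG (hS : IsMinimalSep G X Y S) {s : V}
    (hs : s ∈ S) : s ∈ X ∨ ∃ u ∈ reachG G X S, G.Adj u s := by
  have hns : ¬ IsSep G X Y (S \ {s}) := hS.2 _ (Set.sdiff_singleton_ssubset.mpr hs)
  simp only [IsSep, not_forall, not_exists, not_and] at hns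
  obtain ⟨x, y, hx, hy, r, hr⟩ := hns
  have eq_s_of_mem : ∀ w ∈ r.support, w ∈ S → w = s := fun w hw hwS =>
    by_contra fun hne => hr w ⟨hwS, hne⟩ hw
  by_cases hxS : x ∈ S
  · exact .inl (eq_s_of_mem x r.start_mem_support hxS ▸ hx)
  -- The dart of `r` leaving `R(X, S)` must enter `S`, and `s` is the only vertex of `S` on `r`.
  obtain ⟨d, hd, hfst, hsnd⟩ := r.exists_boundary_dart (reachG G X S)
    ⟨x, hx, hxS, .nil, by simpa using hxS⟩ (hS.1.disjoint_reachG.notMem_of_mem_right hy)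
  have hsndS : d.snd ∈ S := by
    by_contra hnS
    refine hsnd (mem_reachG_of_walk hfst (.cons d.adj .nil) fun u hu => ?_)
    simp only [Walk.support_cons, Walk.support_nil, List.mem_cons, List.not_mem_nil,
      or_false] at hu
    rcases hu with rfl | rfl
    exacts [notMem_of_mem_reachG hfst, hnS]
  exact .inr ⟨d.fst, hfst, eq_s_of_mem _ (r.dart_snd_mem_support_of_mem_darts hd) hsndS ▸ d.adj⟩

end reachG

theorem dominating_important_separator_separates_general {V : Type}
    (G : SimpleGraph V) (A B S S' : Set V)
    (hS : IsMinimalSep G A B S)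
    (hdom : DominatesSep G A B S S') :
    IsSep G S B S' := by
  intro s b hs hb p
  by_contra! hp
  have hsS' : s ∉ S' := fun h => hp s h p.start_mem_support
  have hb_reach : b ∈ reachG G A S' := by
    rcases hS.mem_or_exists_adj_reachG hs with hsA | ⟨u, hu, hus⟩
    · exact ⟨s, hsA, hsS', p, fun w hw hwS' => hp w hwS' hw⟩
    · refine mem_reachG_of_walk (hdom.2.2 hu) (.cons hus p) fun w hw hwS' => ?_
      rw [Walk.support_cons, List.mem_cons] at hw
      rcases hw with rfl | hw
      exacts [notMem_of_mem_reachG (hdom.2.2 hu) hwS', hp w hwS' hw]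
  exact hdom.1.1.1.disjoint_reachG.notMem_of_mem_right hb hb_reach

/-- If `S` is a minimal `(A, B)`-separator and `S'` is an important `(A, B)`-separator that
dominates `S`, then `S'` is an `(S, B)`-separator. -/
theorem dominating_important_separator_separates {V : Type} [Fintype V]
    (G : SimpleGraph V) (A B S S' : Set V)
    (hS : IsMinimalSep G A B S)
    (hdom : DominatesSep G A B S S') :
    IsSep G S B S' :=
  dominating_important_separator_separates_general G A B S S' hS hdom
end

section
/- Let I = (G, {W_1, …, W_t}, k) be an instance of Partitioned Subset Treewidth and let (A, S, B) be a separation of G with |S| ≤ k+1. If {W_1, …, W_t} ◁ (A,S) = {W_1, …, W_t}, then flp_{I ◁ (A,S)}(W_i) ≥ flp_I(W_i) for every terminal clique W_i. -/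
open SimpleGraph

variable {V ι : Type*}

/-! Every terminal clique of `I ◁ (A, S)` either is `S` or meets `A`, and then, being a clique
with no edge to `B`, lies in `A ∪ S`; so when the terminal cliques are unchanged they all live
in `G ◁ (A, S)`. In a separation `(A', S', B')` of `G ◁ (A, S)` the clique `S` cannot meet both
`A'` and `B'`; if it avoids `B'`, then `(A' ∪ B, S', B')` is a separation of `G` (symmetrically
otherwise). So every separation competing for `flp_{I ◁ (A,S)}(W_i)` yields one of the same
order competing for `flp_I(W_i)`. -/

theorem restrictGraph_adj_of_adj {G : SimpleGraph V} {A S : Set V} {a b : ↥(A ∪ S)}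
    (h : G.Adj a b) : (restrictGraph G A S).Adj a b :=
  Or.inl h

theorem restrictGraph_adj_of_mem {G : SimpleGraph V} {A S : Set V} {a b : ↥(A ∪ S)}
    (hab : a ≠ b) (ha : (a : V) ∈ S) (hb : (b : V) ∈ S) : (restrictGraph G A S).Adj a b :=
  Or.inr ⟨hab, ha, hb⟩

namespace IsSeparation

variable {G : SimpleGraph V} {A S B : Set V} {A' S' B' : Set ↥(A ∪ S)}

theorem symm (h : IsSeparation G A S B) : IsSeparation G B S A where
  disjoint_AS := h.disjoint_SB.symm
  disjoint_AB := h.disjoint_AB.symm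
  disjoint_SB := h.disjoint_AS.symm
  union_eq := by rw [← h.union_eq]; ext; simp only [Set.mem_union]; tauto
  no_adj _ _ hb ha hadj := h.no_adj ha hb hadj.symm

theorem mem_union_of_notMem (h : IsSeparation G A S B) {v : V} (hv : v ∉ B) : v ∈ A ∪ S := by
  have hv' : v ∈ A ∪ S ∪ B := h.union_eq ▸ Set.mem_univ v
  exact hv'.resolve_right hv

theorem disjoint_right_union (h : IsSeparation G A S B) : Disjoint B (A ∪ S) :=
  Set.disjoint_union_right.2 ⟨h.disjoint_AB.symm, h.disjoint_SB.symm⟩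

theorem subset_union_of_isClique (h : IsSeparation G A S B) {W : Set V} (hW : G.IsClique W)
    (hWA : (W ∩ A).Nonempty) : W ⊆ A ∪ S := by
  obtain ⟨a, haW, haA⟩ := hWA
  intro v hvW
  refine h.mem_union_of_notMem fun hvB => h.no_adj haA hvB (hW haW hvW ?_)
  exact h.disjoint_AB.ne_of_mem haA hvB

theorem subset_union_of_mem_restrictCliques {Ws : Set (Set V)} {W : Set V}
    (hsep : IsSeparation G A S B) (hcl : ∀ W ∈ Ws, G.IsClique W)
    (hW : W ∈ restrictCliques Ws A S) : W ⊆ A ∪ S := by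
  rcases hW with ⟨hWs, hWA⟩ | ⟨rfl, -⟩
  · exact hsep.subset_union_of_isClique (hcl W hWs) hWA
  · exact Set.subset_union_right

theorem extend_restrictGraph (hsep : IsSeparation G A S B)
    (hsep' : IsSeparation (restrictGraph G A S) A' S' B')
    (hS : ∀ s : ↥(A ∪ S), (s : V) ∈ S → s ∉ B') :
    IsSeparation G (Subtype.val '' A' ∪ B) (Subtype.val '' S') (Subtype.val '' B') where
  disjoint_AS := Set.disjoint_union_left.2
    ⟨(Set.disjoint_image_iff Subtype.val_injective).2 hsep'.disjoint_AS,
      hsep.disjoint_right_union.mono_right (Subtype.coe_image_subset _ _)⟩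
  disjoint_AB := Set.disjoint_union_left.2
    ⟨(Set.disjoint_image_iff Subtype.val_injective).2 hsep'.disjoint_AB,
      hsep.disjoint_right_union.mono_right (Subtype.coe_image_subset _ _)⟩
  disjoint_SB := (Set.disjoint_image_iff Subtype.val_injective).2 hsep'.disjoint_SB
  union_eq := by
    have hP : Subtype.val '' A' ∪ Subtype.val '' S' ∪ Subtype.val '' B' = A ∪ S := by
      rw [← Set.image_union, ← Set.image_union, hsep'.union_eq, Subtype.coe_image_univ]
    rw [Set.union_right_comm _ B, Set.union_right_comm _ B, hP, hsep.union_eq]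
  no_adj := by
    rintro _ _ (⟨x, hx, rfl⟩ | haB) ⟨y, hy, rfl⟩ hadj
    · exact hsep'.no_adj hx hy (restrictGraph_adj_of_adj hadj)
    · rcases y.2 with hyA | hyS
      · exact hsep.no_adj hyA haB hadj.symm
      · exact hS y hyS hy

theorem exists_extend_restrictGraph (hsep : IsSeparation G A S B)
    (hsep' : IsSeparation (restrictGraph G A S) A' S' B') :
    ∃ A₀ B₀ : Set V, IsSeparation G A₀ (Subtype.val '' S') B₀ ∧
      Subtype.val '' A' ⊆ A₀ ∧ Subtype.val '' B' ⊆ B₀ := by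
  by_cases hS : ∀ s : ↥(A ∪ S), (s : V) ∈ S → s ∉ B'
  · exact ⟨_, _, hsep.extend_restrictGraph hsep' hS, Set.subset_union_left, subset_rfl⟩
  · simp only [not_forall, not_not] at hS
    obtain ⟨s, hsS, hsB⟩ := hS
    have hS' : ∀ t : ↥(A ∪ S), (t : V) ∈ S → t ∉ A' := fun t htS htA =>
      hsep'.no_adj htA hsB
        (restrictGraph_adj_of_mem (hsep'.disjoint_AB.ne_of_mem htA hsB) htS hsS)
    exact ⟨_, _, (hsep.extend_restrictGraph hsep'.symm hS').symm, subset_rfl,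
      Set.subset_union_left⟩

end IsSeparation

theorem isSeparation_empty_compl (G : SimpleGraph V) (X : Set V) : IsSeparation G ∅ X Xᶜ where
  disjoint_AS := Set.empty_disjoint X
  disjoint_AB := Set.empty_disjoint Xᶜ
  disjoint_SB := disjoint_compl_right
  union_eq := by rw [Set.empty_union, Set.union_compl_self]
  no_adj _ _ ha := absurd ha (Set.notMem_empty _)

theorem preimage_otherUnion_subset {P : Set V} {Ws : Set (Set V)} {Wi : Set V}
    (hWs : ∀ W ∈ Ws, W ⊆ P) (hWi : Wi ⊆ P) :
    Subtype.val ⁻¹' otherUnion Ws Wi ⊆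
      otherUnion ((fun W => (Subtype.val : P → V) ⁻¹' W) '' Ws) (Subtype.val ⁻¹' Wi) := by
  rintro y ⟨W, ⟨hW, hWne⟩, hyW⟩
  refine ⟨Subtype.val ⁻¹' W, ⟨⟨W, hW, rfl⟩, fun heq => hWne ?_⟩, hyW⟩
  rw [Set.mem_singleton_iff, Subtype.preimage_coe_eq_preimage_coe_iff,
    Set.inter_eq_right.2 (hWs W hW), Set.inter_eq_right.2 hWi] at heq
  exact heq

theorem subset_image_union_of_preimage_subset {P X : Set V} {A' S' : Set P} (hX : X ⊆ P)
    (h : Subtype.val ⁻¹' X ⊆ A' ∪ S') : X ⊆ Subtype.val '' A' ∪ Subtype.val '' S' := by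
  rw [← Set.image_union, ← Set.inter_eq_right.2 hX, ← Subtype.image_preimage_coe]
  exact Set.image_mono h

theorem flpG_le_of_isSeparation {G : SimpleGraph V} {X Y A S B : Set V} (hX : X ≠ Set.univ)
    (hsep : IsSeparation G A S B) (hXAS : X ⊆ A ∪ S) (hYBS : Y ⊆ B ∪ S) (hB : B.Nonempty) :
    flpG G X Y ≤ S.ncard := by
  rw [flpG, if_neg hX]
  exact Nat.sInf_le ⟨A, S, B, hsep, hXAS, hYBS, hB, rfl⟩

theorem flpG_le_ncard (G : SimpleGraph V) (X Y : Set V) : flpG G X Y ≤ X.ncard := by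
  by_cases hX : X = Set.univ
  · rw [flpG, if_pos hX]
  · refine flpG_le_of_isSeparation hX (isSeparation_empty_compl G X) Set.subset_union_right ?_
      (Set.nonempty_compl.2 hX)
    rw [Set.compl_union_self]
    exact Set.subset_univ Y

theorem exists_isSeparation_ncard_eq_flpG (G : SimpleGraph V) {X : Set V} (Y : Set V)
    (hX : X ≠ Set.univ) :
    ∃ A S B : Set V, IsSeparation G A S B ∧ X ⊆ A ∪ S ∧ Y ⊆ B ∪ S ∧ B.Nonempty ∧
      S.ncard = flpG G X Y := by
  rw [flpG, if_neg hX]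
  refine Nat.sInf_mem (s := {n | ∃ A S B : Set V, IsSeparation G A S B ∧ X ⊆ A ∪ S ∧
    Y ⊆ B ∪ S ∧ B.Nonempty ∧ S.ncard = n}) ⟨X.ncard, ?_⟩
  refine ⟨∅, X, Xᶜ, isSeparation_empty_compl G X, Set.subset_union_right, ?_,
    Set.nonempty_compl.2 hX, rfl⟩
  rw [Set.compl_union_self]
  exact Set.subset_univ Y

theorem restrict_same_cliques_flp_general {V : Type}
    (G : SimpleGraph V) (Ws : Set (Set V)) (k : ℕ)
    (hI : IsPSTWInstance G Ws k)
    (A S B : Set V) (hsep : IsSeparation G A S B)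
    (hsame : restrictCliques Ws A S = Ws) :
    ∀ Wi ∈ Ws,
      flpInst G Ws Wi
        ≤ flpInst (restrictGraph G A S) (restrictSets Ws A S) (Subtype.val ⁻¹' Wi) := by
  intro Wi hWi
  have hWs : ∀ W ∈ Ws, W ⊆ A ∪ S := fun W hW =>
    hsep.subset_union_of_mem_restrictCliques (fun W hW => (hI.2.2.2 W hW).1) (by rwa [hsame])
  have hY : Subtype.val ⁻¹' otherUnion Ws Wi ⊆
      otherUnion (restrictSets Ws A S) (Subtype.val ⁻¹' Wi) := by
    rw [restrictSets, hsame]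
    exact preimage_otherUnion_subset hWs (hWs Wi hWi)
  by_cases hu : (Subtype.val ⁻¹' Wi : Set ↥(A ∪ S)) = Set.univ
  · calc flpInst G Ws Wi ≤ Wi.ncard := flpG_le_ncard _ _ _
      _ = (Subtype.val ⁻¹' Wi : Set ↥(A ∪ S)).ncard :=
        (Set.ncard_preimage_of_injective_subset_range Subtype.val_injective
          (Subtype.range_coe.symm ▸ hWs Wi hWi)).symm
      _ = _ := by rw [flpInst, flpG, if_pos hu]
  · obtain ⟨A', S', B', hsep', hWiAS, hYBS, hB', hcard⟩ :=
      exists_isSeparation_ncard_eq_flpG (restrictGraph G A S)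
        (otherUnion (restrictSets Ws A S) (Subtype.val ⁻¹' Wi)) hu
    obtain ⟨A₀, B₀, hsep₀, hA₀, hB₀⟩ := hsep.exists_extend_restrictGraph hsep'
    have hWi_ne : Wi ≠ Set.univ := fun h => hu (by rw [h, Set.preimage_univ])
    have hWi₀ : Wi ⊆ A₀ ∪ Subtype.val '' S' :=
      (subset_image_union_of_preimage_subset (hWs Wi hWi) hWiAS).trans
        (Set.union_subset_union_left _ hA₀)
    have hY₀ : otherUnion Ws Wi ⊆ B₀ ∪ Subtype.val '' S' :=
      (subset_image_union_of_preimage_subset (Set.sUnion_subset fun W hW => hWs W hW.1)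
        (hY.trans hYBS)).trans (Set.union_subset_union_left _ hB₀)
    calc flpInst G Ws Wi ≤ (Subtype.val '' S').ncard :=
          flpG_le_of_isSeparation hWi_ne hsep₀ hWi₀ hY₀ ((hB'.image _).mono hB₀)
      _ = _ := by rw [Set.ncard_image_of_injective _ Subtype.val_injective, hcard, flpInst]

/-- If `(A, S, B)` is a separation of `G` with `|S| ≤ k + 1` and the terminal cliques of
`I ◁ (A, S)` coincide with those of `I`, then `flp_{I ◁ (A,S)}(W_i) ≥ flp_I(W_i)` for every
terminal clique `W_i`. -/
theorem restrict_same_cliques_flp {V : Type} [Fintype V]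
    (G : SimpleGraph V) (Ws : Set (Set V)) (k : ℕ)
    (hI : IsPSTWInstance G Ws k)
    (A S B : Set V) (hsep : IsSeparation G A S B) (hScard : S.ncard ≤ k + 1)
    (hsame : restrictCliques Ws A S = Ws) :
    ∀ Wi ∈ Ws,
      flpInst G Ws Wi
        ≤ flpInst (restrictGraph G A S) (restrictSets Ws A S) (Subtype.val ⁻¹' Wi) :=
  restrict_same_cliques_flp_general G Ws k hI A S B hsep hsame
end
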